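/- Let E be a real inner product space, x ∈ E, and let W₀, W₁, …, W_k be finite-dimensional subspaces of E with p_i denoting the orthogonal projection of x onto W_i. Assume p_i ∈ W_{i+1} for every 0 ≤ i ≤ k-1. Then for every 0 ≤ i ≤ k-1, ‖p_i‖² + ‖p_{i+1} - p_i‖² = ‖p_{i+1}‖². In particular ‖p_i‖ ≤ ‖p_{i+1}‖. -/
import Mathlib


open scoped RealInnerProductSpace

/-- in an AP sweep, where `p i` is the orthogonal projection of `x`
onto the finite-dimensional subspace `W i` and `p i ∈ W (i+1)`, one has the
Pythagorean identity `‖p i‖² + ‖p (i+1) - p i‖² = ‖p (i+1)‖²`; in particular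
`‖p i‖ ≤ ‖p (i+1)‖`. -/
theorem ap_pythagorean_increment
    {E : Type*} [NormedAddCommGroup E] [InnerProductSpace ℝ E]
    (k : ℕ) (x : E) (W : ℕ → Submodule ℝ E) (hWfd : ∀ i ≤ k, FiniteDimensional ℝ (W i))
    (p : ℕ → E)
    (hmem : ∀ i ≤ k, p i ∈ W i)
    (horth : ∀ i ≤ k, ∀ w ∈ W i, ⟪x - p i, w⟫ = 0)
    (hchain : ∀ i < k, p i ∈ W (i + 1)) :
    ∀ i < k, ‖p i‖ ^ 2 + ‖p (i + 1) - p i‖ ^ 2 = ‖p (i + 1)‖ ^ 2 ∧ ‖p i‖ ≤ ‖p (i + 1)‖ := by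
  intro i hi
  have h1 : ⟪x - p i, p i⟫ = 0 := horth i hi.le (p i) (hmem i hi.le)
  have h2 : ⟪x - p (i+1), p i⟫ = 0 := horth (i+1) hi (p i) (hchain i hi)
  have hperp : ⟪p (i+1) - p i, p i⟫ = 0 := by
    have : p (i+1) - p i = (x - p i) - (x - p (i+1)) := by abel
    rw [this, inner_sub_left, h1, h2]; ring
  have key : ‖p i‖ ^ 2 + ‖p (i + 1) - p i‖ ^ 2 = ‖p (i + 1)‖ ^ 2 := by
    have := norm_add_sq_real (p i) (p (i+1) - p i)
    rw [real_inner_comm] at hperp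
    simp [hperp] at this
    linarith
  refine ⟨key, ?_⟩
  nlinarith [norm_nonneg (p i), norm_nonneg (p (i+1)), sq_nonneg (‖p (i+1) - p i‖)]
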